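/- The subgroup of GL(μ,ℂ) generated by the group (ℝ⁺ × U(1))^μ of diagonal matrices with nonzero complex entries and the complex special orthogonal group SO(μ,ℂ) equals all of GL(μ,ℂ). -/

import Mathlib

/-!
`GL n K` is generated by invertible diagonal matrices and transvections, so it suffices to reach
every transvection `1 + c Eᵢⱼ`. Placing a `2 × 2` matrix in the `(i, j)`-plane is multiplicative
and preserves diagonal and orthogonal matrices, which reduces this to `2 × 2` matrices, where
conjugation by a diagonal matrix rescales `c`. For `c = 7 / 12` the singular value decomposition
is rational, with rotations taken from the 3-4-5 triangle:
`[[1, 7/12], [0, 1]] = [[3/5, 4/5], [-4/5, 3/5]] · diag(3/4, 4/3) · [[4/5, -3/5], [3/5, 4/5]]`.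
An orthogonal matrix of determinant `-1` times a diagonal reflection lies in `SO`.
-/

open Matrix

namespace Matrix

variable {n R : Type*} [DecidableEq n] [CommRing R]

def planeEmbed (i j : n) (M : Matrix (Fin 2) (Fin 2) R) : Matrix n n R :=
  of fun k l =>
    if k = i then (if l = i then M 0 0 else if l = j then M 0 1 else 0)
    else if k = j then (if l = i then M 1 0 else if l = j then M 1 1 else 0)
    else (1 : Matrix n n R) k l

variable {i j : n}

theorem planeEmbed_one : planeEmbed i j (1 : Matrix (Fin 2) (Fin 2) R) = 1 := by
  ext k l
  simp only [planeEmbed, of_apply, one_apply]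
  split_ifs <;> simp_all

theorem planeEmbed_transpose (M : Matrix (Fin 2) (Fin 2) R) :
    (planeEmbed i j M)ᵀ = planeEmbed i j Mᵀ := by
  ext k l
  simp only [planeEmbed, of_apply, transpose_apply, one_apply]
  split_ifs <;> grind

theorem planeEmbed_diagonal (d : Fin 2 → R) :
    planeEmbed i j (diagonal d) =
      diagonal fun k => if k = i then d 0 else if k = j then d 1 else 1 := by
  ext k l
  simp only [planeEmbed, of_apply, diagonal_apply, one_apply]
  split_ifs <;> grind

theorem planeEmbed_transvection (hij : i ≠ j) (c : R) :
    planeEmbed i j (transvection 0 1 c) = transvection i j c := by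
  ext k l
  simp only [planeEmbed, of_apply, transvection, add_apply, one_apply, single_apply]
  split_ifs <;> grind

variable [Fintype n]

theorem planeEmbed_mul (hij : i ≠ j) (M N : Matrix (Fin 2) (Fin 2) R) :
    planeEmbed i j (M * N) = planeEmbed i j M * planeEmbed i j N := by
  ext k l
  by_cases hk : k = i ∨ k = j
  · rw [mul_apply, Finset.sum_eq_add i j hij
      (by rcases hk with rfl | rfl <;> simp_all [planeEmbed]) (by simp) (by simp)]
    rcases hk with rfl | rfl <;> simp [planeEmbed, mul_apply, Fin.sum_univ_two, hij.symm] <;>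
      split_ifs <;> simp
  · push Not at hk
    rw [mul_apply, Finset.sum_eq_single k
      (fun m _ hm => by simp [planeEmbed, hk.1, hk.2, one_apply_ne hm.symm]) (by simp)]
    simp [planeEmbed, hk.1, hk.2, one_apply]

def planeEmbedHom (hij : i ≠ j) : Matrix (Fin 2) (Fin 2) R →* Matrix n n R where
  toFun := planeEmbed i j
  map_one' := planeEmbed_one
  map_mul' := planeEmbed_mul hij

end Matrix

section

variable (n K : Type*) [Fintype n] [DecidableEq n] [Field K]

def diagonalSO : Subgroup (GL n K) :=
  Subgroup.closure
    ({A : GL n K | ∃ d : n → K, (∀ i, d i ≠ 0) ∧ (A : Matrix n n K) = diagonal d} ∪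
      {A : GL n K | (A : Matrix n n K)ᵀ * (A : Matrix n n K) = 1 ∧ (A : Matrix n n K).det = 1})

def diagonalSOMatrices : Submonoid (Matrix n n K) :=
  (diagonalSO n K).toSubmonoid.map (Units.coeHom _)

variable {n K}

theorem coe_mem_diagonalSOMatrices_iff (g : GL n K) :
    (g : Matrix n n K) ∈ diagonalSOMatrices n K ↔ g ∈ diagonalSO n K :=
  ⟨fun ⟨_, hg', h⟩ => Units.ext h ▸ hg', fun hg => ⟨g, hg, rfl⟩⟩

theorem diagonal_mem_diagonalSOMatrices {d : n → K} (hd : ∀ i, d i ≠ 0) :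
    diagonal d ∈ diagonalSOMatrices n K :=
  ⟨⟨diagonal d, diagonal d⁻¹, by simp [hd], by simp [hd]⟩,
    Subgroup.subset_closure (Or.inl ⟨d, hd, rfl⟩), rfl⟩

theorem mem_diagonalSOMatrices_of_det_eq_one {A : Matrix n n K} (hA : Aᵀ * A = 1)
    (hdet : A.det = 1) : A ∈ diagonalSOMatrices n K :=
  ⟨⟨A, Aᵀ, mul_eq_one_comm.mp hA, hA⟩, Subgroup.subset_closure (Or.inr ⟨hA, hdet⟩), rfl⟩

theorem mem_diagonalSOMatrices_of_transpose_mul_self {A : Matrix n n K} (hA : Aᵀ * A = 1) :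
    A ∈ diagonalSOMatrices n K := by
  by_cases hdet : A.det = 1
  · exact mem_diagonalSOMatrices_of_det_eq_one hA hdet
  have hdet' : A.det = -1 := by
    have := congrArg det hA
    rw [det_mul, det_transpose, det_one] at this
    exact (mul_self_eq_one_iff.mp this).resolve_left hdet
  obtain ⟨i⟩ : Nonempty n := not_isEmpty_iff.mp fun _ => hdet det_isEmpty
  set F : Matrix n n K := diagonal fun k => if k = i then -1 else 1
  have hFF : F * F = 1 := by
    rw [diagonal_mul_diagonal, ← diagonal_one]
    congr 1
    ext k
    split_ifs <;> norm_num
  have hdetF : F.det = -1 := by simp [F, det_diagonal, Finset.prod_ite_eq']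
  have hAF : A * F ∈ diagonalSOMatrices n K := by
    refine mem_diagonalSOMatrices_of_det_eq_one ?_ (by rw [det_mul, hdet', hdetF]; norm_num)
    rw [transpose_mul, diagonal_transpose, Matrix.mul_assoc, ← Matrix.mul_assoc Aᵀ, hA,
      Matrix.one_mul, hFF]
  have hF : F ∈ diagonalSOMatrices n K :=
    diagonal_mem_diagonalSOMatrices fun k => by split_ifs <;> norm_num
  simpa [Matrix.mul_assoc, hFF] using mul_mem hAF hF

theorem rotation_mem_diagonalSOMatrices {a b : K} (hab : a ^ 2 + b ^ 2 = 1) :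
    !![a, b; -b, a] ∈ diagonalSOMatrices (Fin 2) K := by
  refine mem_diagonalSOMatrices_of_det_eq_one ?_ (by simp [det_fin_two_of]; linear_combination hab)
  ext k l
  fin_cases k <;> fin_cases l <;> simp [mul_apply, Fin.sum_univ_two] <;> grind

theorem transvection_mem_diagonalSOMatrices_fin_two [CharZero K] (c : K) :
    transvection (0 : Fin 2) 1 c ∈ diagonalSOMatrices (Fin 2) K := by
  rcases eq_or_ne c 0 with rfl | hc
  · rw [transvection_zero]
    exact one_mem _
  have hfactor : transvection (0 : Fin 2) 1 c =
      diagonal ![12 * c / 7, 1] * !![3 / 5, 4 / 5; -(4 / 5), 3 / 5] * diagonal ![3 / 4, 4 / 3] *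
        !![4 / 5, -(3 / 5); -(-(3 / 5)), 4 / 5] * diagonal ![7 / (12 * c), 1] := by
    ext k l
    fin_cases k <;> fin_cases l <;>
      simp [transvection, mul_apply, Fin.sum_univ_two, hc] <;> field_simp <;> ring
  have hdiag {x y : K} (hx : x ≠ 0) (hy : y ≠ 0) :
      diagonal ![x, y] ∈ diagonalSOMatrices (Fin 2) K :=
    diagonal_mem_diagonalSOMatrices (by simp [Fin.forall_fin_two, hx, hy])
  rw [hfactor]
  refine mul_mem (mul_mem (mul_mem (mul_mem (hdiag (by simp [hc]) one_ne_zero) ?_)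
    (hdiag (by norm_num) (by norm_num))) ?_) (hdiag (by simp [hc]) one_ne_zero)
  all_goals exact rotation_mem_diagonalSOMatrices (by norm_num)

theorem planeEmbed_mem_diagonalSOMatrices {i j : n} (hij : i ≠ j) {M : Matrix (Fin 2) (Fin 2) K}
    (hM : M ∈ diagonalSOMatrices (Fin 2) K) : planeEmbed i j M ∈ diagonalSOMatrices n K := by
  obtain ⟨g, hg, rfl⟩ := hM
  let ψ := Units.map (planeEmbedHom hij : Matrix (Fin 2) (Fin 2) K →* Matrix n n K)
  suffices diagonalSO (Fin 2) K ≤ (diagonalSO n K).comap ψ from ⟨ψ g, this hg, rfl⟩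
  refine (Subgroup.closure_le _).2 ?_
  rintro A (⟨d, hd, hA⟩ | ⟨hA, -⟩) <;>
    rw [SetLike.mem_coe, Subgroup.mem_comap, ← coe_mem_diagonalSOMatrices_iff] <;>
    change planeEmbed i j (A : Matrix (Fin 2) (Fin 2) K) ∈ _
  · rw [hA, planeEmbed_diagonal]
    exact diagonal_mem_diagonalSOMatrices fun k => by split_ifs <;> simp [hd]
  · apply mem_diagonalSOMatrices_of_transpose_mul_self
    rw [planeEmbed_transpose, ← planeEmbed_mul hij, hA, planeEmbed_one]

theorem transvection_mem_diagonalSOMatrices [CharZero K] {i j : n} (hij : i ≠ j) (c : K) :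
    transvection i j c ∈ diagonalSOMatrices n K :=
  planeEmbed_transvection hij c ▸
    planeEmbed_mem_diagonalSOMatrices hij (transvection_mem_diagonalSOMatrices_fin_two c)

theorem diagonalSO_eq_top [CharZero K] : diagonalSO n K = ⊤ := by
  refine eq_top_iff.2 fun g _ => (coe_mem_diagonalSOMatrices_iff g).1 ?_
  refine diagonal_transvection_induction_of_det_ne_zero (· ∈ diagonalSOMatrices n K) g
    g.det_ne_zero ?_ ?_ fun A B _ _ => mul_mem
  · intro d hd
    exact diagonal_mem_diagonalSOMatrices (by simpa [det_diagonal, Finset.prod_ne_zero_iff] using hd)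
  · intro t
    exact transvection_mem_diagonalSOMatrices t.hij t.c

end

theorem stmt2 (μ : ℕ) :
    Subgroup.closure
        ({ A : GL (Fin μ) ℂ | ∃ d : Fin μ → ℂ, (∀ i, d i ≠ 0) ∧
            (A : Matrix (Fin μ) (Fin μ) ℂ) = Matrix.diagonal d }
          ∪ { A : GL (Fin μ) ℂ |
              (A : Matrix (Fin μ) (Fin μ) ℂ)ᵀ * (A : Matrix (Fin μ) (Fin μ) ℂ) = 1 ∧
              (A : Matrix (Fin μ) (Fin μ) ℂ).det = 1 })
      = (⊤ : Subgroup (GL (Fin μ) ℂ)) :=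
  diagonalSO_eq_top
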